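/- There exists a k-register word automaton A (k = 2 suffices) over the infinite data-domain D such that some Boolean path of its Boolean associate A_B corresponds to no data-path of A. -/
import Mathlib


/-- A register word automaton over Boolean signals `P`, data-domain `D`, states `Q`,
and registers indexed by `R` (for a `k`-register automaton, `R = Fin k`).
The transition function reads a Boolean letter, an input-guard and an output-guard
(comparisons of the data-values of `i` resp. `o` with the registers) and yields
a set of (assignment, successor-state) pairs. -/
structure RegAutomaton (P D Q R : Type) where
  d0 : D
  q0 : Q
  F : Set Q
  tr : Q → (P → Bool) → (R → Bool) → (R → Bool) → Set ((R → Bool) × Q)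

/-- A data-path of a register automaton on the letter sequence `(l j, di j, dout j)`. -/
structure DataPath {P D Q R : Type} [DecidableEq D] (A : RegAutomaton P D Q R)
    (l : ℕ → P → Bool) (di dout : ℕ → D) where
  st : ℕ → Q
  regs : ℕ → R → D
  asgn : ℕ → R → Bool
  init_st : st 0 = A.q0
  init_regs : ∀ n, regs 0 n = A.d0
  step : ∀ j, (asgn j, st (j + 1)) ∈
    A.tr (st j) (l j) (fun n => decide (di j = regs j n)) (fun n => decide (dout j = regs j n))
  update : ∀ j n, regs (j + 1) n = if asgn j n then di j else regs j n

/-- A Boolean path of the Boolean associate `A_B` of a register automaton `A`: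
an infinite sequence of states and letters over `2^(P ∪ G_i ∪ G_o ∪ Asgn)`
respecting the transition relation of `A_B`. -/
structure BoolPath {P D Q R : Type} (A : RegAutomaton P D Q R) where
  st : ℕ → Q
  lP : ℕ → P → Bool
  gi : ℕ → R → Bool
  go : ℕ → R → Bool
  asgn : ℕ → R → Bool
  init_st : st 0 = A.q0
  step : ∀ j, (asgn j, st (j + 1)) ∈ A.tr (st j) (lP j) (gi j) (go j)

/-- A data-path corresponds to a Boolean path iff they visit the same states, carry the
same `2^P`-letters, and at every step the guard and assignment letters encode the guards
and assignments of the data-path. -/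
def Corresponds {P D Q R : Type} [DecidableEq D] {A : RegAutomaton P D Q R}
    {l : ℕ → P → Bool} {di dout : ℕ → D}
    (dp : DataPath A l di dout) (bp : BoolPath A) : Prop :=
  (∀ j, bp.st j = dp.st j) ∧ (∀ j, bp.lP j = l j) ∧
  (∀ j, bp.gi j = fun n => decide (di j = dp.regs j n)) ∧
  (∀ j, bp.go j = fun n => decide (dout j = dp.regs j n)) ∧
  (∀ j, bp.asgn j = dp.asgn j)


/-- there exists a register word automaton `A` (with `k = 2` registers)
over the infinite data-domain `D` such that some Boolean path of its Boolean associate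
corresponds to no data-path of `A`. -/
theorem stmt1 (D : Type) [Infinite D] [DecidableEq D] :
    ∃ (P Q : Type) (_ : Finite P) (_ : Finite Q) (A : RegAutomaton P D Q (Fin 2))
      (bp : BoolPath A),
      ∀ (l : ℕ → P → Bool) (di dout : ℕ → D) (dp : DataPath A l di dout),
        ¬ Corresponds dp bp := by
  obtain ⟨d⟩ : Nonempty D := inferInstance
  refine ⟨Unit, Unit, inferInstance, inferInstance,
    ⟨d, (), Set.univ, fun _ _ _ _ => Set.univ⟩,
    ⟨fun _ => (), fun _ _ => false, fun _ n => n == 0, fun _ _ => false,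
      fun _ _ => false, rfl, fun _ => trivial⟩, ?_⟩
  intro l di dout dp ⟨_, _, hgi, _, _⟩
  have h := congrFun (hgi 0)
  have h0 := h 0
  have h1 := h 1
  simp only [dp.init_regs] at h0 h1
  simp at h0 h1
  rw [h0] at h1
  exact h1 rfl
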